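/- Fix β ∈ [0,1) and a deployment y ⊆ I with |y| = P, and assume U_C is nonempty. Then sup_{μ ∈ U_C} CVaR_β^μ(f_y) ≤ sup_{μ ∈ U_D} CVaR_β^μ(f_y) + ℓ/(1−β). -/

import Mathlib

open MeasureTheory

/-- The plane ℝ². -/
abbrev Plane := EuclideanSpace ℝ (Fin 2)

/-- Conditional value-at-risk at level `β` of the loss `f` under the measure `μ`:
`CVaR_β^μ(f) = inf_{α ≥ 0} (α + (1/(1-β)) ∫ max (f x - α) 0 dμ)`. -/
noncomputable def cvar (β : ℝ) (μ : Measure Plane) (f : Plane → ℝ) : ℝ :=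
  sInf {v : ℝ | ∃ α : ℝ, 0 ≤ α ∧ v = α + (1 / (1 - β)) * ∫ x, max (f x - α) 0 ∂μ}

/-- The discrete support set `Ξ = ⋃ r, Ξ'_r`. -/
def XiSet {R : Type*} (Ξ' : R → Set Plane) : Set Plane := ⋃ r, Ξ' r

/-- The uncertainty region `A_j = ⋃_{r ∈ R_j} A'_r`. -/
def uncRegion {R J : Type*} (A' : R → Set Plane) (Rj : J → Set R) (j : J) : Set Plane :=
  ⋃ r ∈ Rj j, A' r

/-- The continuous distributional uncertainty set `U_C`. -/
def UC {R J : Type*} (A : Set Plane) (A' : R → Set Plane) (Rj : J → Set R) (lam : J → ℝ) :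
    Set (Measure Plane) :=
  {μ | μ Set.univ = 1 ∧ μ A = 1 ∧ ∀ j, μ (uncRegion A' Rj j) = ENNReal.ofReal (lam j)}

/-- The discrete distributional uncertainty set `U_D`. -/
def UD {R J : Type*} (A : Set Plane) (A' : R → Set Plane) (Rj : J → Set R) (lam : J → ℝ)
    (Ξ' : R → Set Plane) : Set (Measure Plane) :=
  {μ ∈ UC A A' Rj lam | μ (XiSet Ξ') = 1}

/-- The distance `f_y(x) = min_{i ∈ y} ‖x - c_i‖` to the nearest deployed facility. -/
noncomputable def distToDeployment {I : Type*} (c : I → Plane) (y : Finset I) (x : Plane) : ℝ :=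
  ⨅ i : y, ‖x - c i.1‖

/-- Worst-case CVaR over an uncertainty set of measures. -/
noncomputable def worstCVaR (β : ℝ) (𝒰 : Set (Measure Plane)) (f : Plane → ℝ) : ℝ :=
  sSup {w : ℝ | ∃ μ ∈ 𝒰, w = cvar β μ f}

section dtd
variable {I : Type*} (c : I → Plane) (y : Finset I)

lemma dtd_eq_inf' (hyne : y.Nonempty) (x : Plane) :
    distToDeployment c y x = y.inf' hyne (fun i => ‖x - c i‖) := by
  rw [Finset.inf'_eq_csInf_image]
  unfold distToDeployment
  rw [iInf, ← Set.range_restrict]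
  rfl

lemma dtd_continuous (hyne : y.Nonempty) : Continuous (distToDeployment c y) := by
  have h : distToDeployment c y = fun x => y.inf' hyne (fun i => ‖x - c i‖) :=
    funext (dtd_eq_inf' c y hyne)
  rw [h]
  exact Continuous.finset_inf'_apply hyne
    (fun i _ => (continuous_id.sub continuous_const).norm)

lemma dtd_nonneg (x : Plane) : 0 ≤ distToDeployment c y x :=
  Real.iInf_nonneg (fun i => norm_nonneg _)

lemma dtd_le {i : I} (hi : i ∈ y) (x : Plane) : distToDeployment c y x ≤ ‖x - c i‖ := by
  rw [dtd_eq_inf' c y ⟨i, hi⟩ x]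
  exact Finset.inf'_le _ hi

lemma dtd_lip (hyne : y.Nonempty) (x z : Plane) :
    distToDeployment c y x ≤ distToDeployment c y z + ‖x - z‖ := by
  rw [dtd_eq_inf' c y hyne z, ← sub_le_iff_le_add]
  apply Finset.le_inf'
  intro i hi
  rw [sub_le_iff_le_add]
  calc distToDeployment c y x ≤ ‖x - c i‖ := dtd_le c y hi x
    _ ≤ ‖z - c i‖ + ‖x - z‖ := by
        have := norm_add_le (x - z) (z - c i)
        rw [sub_add_sub_cancel] at this
        linarith

end dtd

/-- Existence of a measurable transport map into the discrete sets. -/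
lemma exists_transport {R : Type*} [Fintype R]
    (A' : R → Set Plane) (hA'meas : ∀ r, MeasurableSet (A' r))
    (hA'disj : Pairwise (Function.onFun Disjoint A'))
    (Ξ' : R → Set Plane) (hΞ'fin : ∀ r, (Ξ' r).Finite)
    (ℓ : ℝ)
    (hℓ : ∀ r, ∀ a ∈ A' r, ∃ ξ ∈ Ξ' r, ‖a - ξ‖ ≤ ℓ) :
    ∃ T : Plane → Plane, Measurable T ∧ ∀ r, ∀ x ∈ A' r, T x ∈ Ξ' r ∧ ‖x - T x‖ ≤ ℓ := by
  classical
  have hXfin : (XiSet Ξ').Finite := Set.finite_iUnion hΞ'fin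
  set L : List Plane := hXfin.toFinset.toList with hL
  set v : ℕ → Plane := fun k => L.getD k 0 with hv
  set D : ℕ → Set Plane := fun k =>
    ⋃ r, (if v k ∈ Ξ' r ∧ k < L.length then A' r ∩ Metric.closedBall (v k) ℓ else ∅) with hD
  have hDmeas : ∀ k, MeasurableSet (D k) := by
    intro k
    apply MeasurableSet.iUnion
    intro r
    split_ifs
    · exact (hA'meas r).inter measurableSet_closedBall
    · exact MeasurableSet.empty
  have hDmem : ∀ k x, x ∈ D k ↔ ∃ r, (v k ∈ Ξ' r ∧ k < L.length) ∧
      x ∈ A' r ∧ dist x (v k) ≤ ℓ := by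
    intro k x
    simp only [hD, Set.mem_iUnion]
    constructor
    · rintro ⟨r, hr⟩
      by_cases hc : v k ∈ Ξ' r ∧ k < L.length
      · rw [if_pos hc] at hr
        exact ⟨r, hc, hr.1, hr.2⟩
      · rw [if_neg hc] at hr
        exact absurd hr (Set.notMem_empty x)
    · rintro ⟨r, hc, hx, hd⟩
      exact ⟨r, by rw [if_pos hc]; exact ⟨hx, hd⟩⟩
  have hcov : ∀ r, ∀ x ∈ A' r, ∃ k, x ∈ D k := by
    intro r x hx
    obtain ⟨ξ, hξΞ, hξd⟩ := hℓ r x hx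
    have hξL : ξ ∈ L := by
      rw [hL, Finset.mem_toList, Set.Finite.mem_toFinset]
      exact Set.mem_iUnion.2 ⟨r, hξΞ⟩
    obtain ⟨k, hk, hkξ⟩ := List.mem_iff_getElem.1 hξL
    have hvk : v k = ξ := by
      show L.getD k 0 = ξ
      rw [List.getD_eq_getElem _ _ hk, hkξ]
    refine ⟨k, (hDmem k x).2 ⟨r, ?_, hx, ?_⟩⟩
    · rw [hvk]; exact ⟨hξΞ, hk⟩
    · rw [hvk, dist_eq_norm]; exact hξd
  refine ⟨fun x => if h : ∃ k, x ∈ D k then v (Nat.find h) else 0, ?_, ?_⟩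
  · -- measurability
    intro s _
    have hEq : (fun x => if h : ∃ k, x ∈ D k then v (Nat.find h) else 0) ⁻¹' s =
        (⋃ k ∈ {k : ℕ | v k ∈ s}, (D k \ ⋃ j < k, D j)) ∪
          ((⋃ k, D k)ᶜ ∩ (if (0 : Plane) ∈ s then Set.univ else ∅)) := by
      ext x
      by_cases h : ∃ k, x ∈ D k
      · simp only [Set.mem_preimage, dif_pos h, Set.mem_union, Set.mem_inter_iff,
          Set.mem_compl_iff, Set.mem_iUnion, Set.mem_setOf_eq, Set.mem_diff, not_exists]
        constructor
        · intro hs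
          exact Or.inl ⟨Nat.find h, hs, Nat.find_spec h,
            fun j hj => Nat.find_min h hj⟩
        · rintro (⟨k, hks, hkD, hklt⟩ | ⟨hc, _⟩)
          · have hfk : Nat.find h = k := by
              rw [Nat.find_eq_iff]
              exact ⟨hkD, fun j hj => hklt j hj⟩
            rwa [hfk]
          · exact absurd h (by simpa using hc)
      · simp only [Set.mem_preimage, dif_neg h, Set.mem_union, Set.mem_inter_iff,
          Set.mem_compl_iff, Set.mem_iUnion, Set.mem_setOf_eq, Set.mem_diff, not_exists]
        push_neg at h
        constructor
        · intro hs
          refine Or.inr ⟨fun k => h k, ?_⟩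
          rw [if_pos hs]; trivial
        · rintro (⟨k, _, hkD, _⟩ | ⟨_, hc⟩)
          · exact absurd hkD (h k)
          · by_contra hs
            rw [if_neg hs] at hc
            exact hc
    rw [hEq]
    refine MeasurableSet.union ?_ ?_
    · exact MeasurableSet.biUnion (Set.to_countable _)
        (fun k _ => (hDmeas k).diff
          (MeasurableSet.biUnion (Set.to_countable _) (fun j _ => hDmeas j)))
    · refine (MeasurableSet.iUnion hDmeas).compl.inter ?_
      split_ifs
      · exact MeasurableSet.univ
      · exact MeasurableSet.empty
  · -- transport property
    intro r x hx
    have h : ∃ k, x ∈ D k := hcov r x hx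
    simp only [dif_pos h]
    obtain ⟨r', hc', hx', hd'⟩ := (hDmem (Nat.find h) x).1 (Nat.find_spec h)
    have hrr : r' = r := by
      by_contra hne
      exact Set.disjoint_left.1 (hA'disj hne) hx' hx
    rw [hrr] at hc'
    refine ⟨hc'.1, ?_⟩
    rw [← dist_eq_norm]
    exact hd'


lemma cvar_bddBelow (β : ℝ) (hβ1 : β < 1) (μ : Measure Plane) (f : Plane → ℝ) :
    BddBelow {v : ℝ | ∃ α : ℝ, 0 ≤ α ∧ v = α + (1 / (1 - β)) * ∫ x, max (f x - α) 0 ∂μ} := by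
  refine ⟨0, ?_⟩
  rintro w ⟨a, ha, rfl⟩
  have hk0 : (0:ℝ) ≤ 1 / (1 - β) := div_nonneg zero_le_one (by linarith)
  have hI : 0 ≤ ∫ x, max (f x - a) 0 ∂μ := integral_nonneg fun x => le_max_right _ _
  have := mul_nonneg hk0 hI
  linarith

lemma cvar_nonneg (β : ℝ) (hβ1 : β < 1) (μ : Measure Plane) (f : Plane → ℝ) :
    0 ≤ cvar β μ f := by
  apply Real.sInf_nonneg
  rintro w ⟨a, ha, rfl⟩
  have hk0 : (0:ℝ) ≤ 1 / (1 - β) := div_nonneg zero_le_one (by linarith)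
  have hI : 0 ≤ ∫ x, max (f x - a) 0 ∂μ := integral_nonneg fun x => le_max_right _ _
  have := mul_nonneg hk0 hI
  linarith

/-- for a fixed deployment `y`,
`sup_{μ ∈ U_C} CVaR_β^μ(f_y) ≤ sup_{μ ∈ U_D} CVaR_β^μ(f_y) + ℓ/(1-β)`. -/
theorem worstCVaR_continuous_le_discrete_add
    {R J I : Type*} [Fintype R] [Fintype J] [Fintype I] [Nonempty I]
    (β : ℝ) (hβ0 : 0 ≤ β) (hβ1 : β < 1)
    (A : Set Plane) (hAbd : Bornology.IsBounded A) (hAmeas : MeasurableSet A)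
    (A' : R → Set Plane) (hA'meas : ∀ r, MeasurableSet (A' r))
    (hA'ne : ∀ r, (A' r).Nonempty) (hA'disj : Pairwise (Function.onFun Disjoint A'))
    (hA'union : (⋃ r, A' r) = A)
    (Ξ' : R → Set Plane) (hΞ'fin : ∀ r, (Ξ' r).Finite) (hΞ'ne : ∀ r, (Ξ' r).Nonempty)
    (hΞ'sub : ∀ r, Ξ' r ⊆ A' r)
    (Rj : J → Set R)
    (lam : J → ℝ) (hlam : ∀ j, 0 ≤ lam j ∧ lam j ≤ 1)
    (c : I → Plane) (P : ℕ) (hP1 : 1 ≤ P) (hP2 : P ≤ Fintype.card I)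
    (y : Finset I) (hy : y.card = P)
    (ℓ : ℝ) (hℓ0 : 0 ≤ ℓ)
    (hℓ : ∀ r, ∀ a ∈ A' r, ∃ ξ ∈ Ξ' r, ‖a - ξ‖ ≤ ℓ)
    (hUCne : (UC A A' Rj lam).Nonempty) :
    worstCVaR β (UC A A' Rj lam) (distToDeployment c y) ≤
      worstCVaR β (UD A A' Rj lam Ξ') (distToDeployment c y) + ℓ / (1 - β) := by
  classical
  have hyne : y.Nonempty := Finset.card_pos.mp (by rw [hy]; exact hP1)
  set f := distToDeployment c y with hfdef
  have hf_cont : Continuous f := dtd_continuous c y hyne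
  have hf0 : ∀ x, 0 ≤ f x := dtd_nonneg c y
  obtain ⟨ρ, hρ⟩ := hAbd.subset_closedBall 0
  have hyne2 := hyne
  obtain ⟨i₀, hi₀⟩ := hyne2
  set M : ℝ := max (ρ + ‖c i₀‖) 0 with hMdef
  have hM0 : 0 ≤ M := le_max_right _ _
  have hfM : ∀ x ∈ A, f x ≤ M := by
    intro x hx
    have h1 : f x ≤ ‖x - c i₀‖ := dtd_le c y hi₀ x
    have h2 : ‖x‖ ≤ ρ := by
      have := hρ hx; rwa [Metric.mem_closedBall, dist_zero_right] at this
    have h3 : ‖x - c i₀‖ ≤ ‖x‖ + ‖c i₀‖ := norm_sub_le _ _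
    have h4 : f x ≤ ρ + ‖c i₀‖ := by linarith
    exact h4.trans (le_max_left _ _)
  have hβ : (0:ℝ) < 1 - β := by linarith
  have hk0 : (0:ℝ) ≤ 1 / (1 - β) := div_nonneg zero_le_one (le_of_lt hβ)
  have hL0 : 0 ≤ ℓ / (1 - β) := div_nonneg hℓ0 (le_of_lt hβ)
  obtain ⟨T, hTmeas, hTprop⟩ := exists_transport A' hA'meas hA'disj Ξ' hΞ'fin ℓ hℓ
  have huniq : ∀ {x : Plane} {r r' : R}, x ∈ A' r → x ∈ A' r' → r = r' := by
    intro x r r' h h'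
    by_contra hne
    exact Set.disjoint_left.1 (hA'disj hne) h h'
  have hA'A : ∀ r, A' r ⊆ A := fun r => by
    rw [← hA'union]; exact Set.subset_iUnion A' r
  have hΞA : XiSet Ξ' ⊆ A := Set.iUnion_subset fun r => (hΞ'sub r).trans (hA'A r)
  have hXmeas : MeasurableSet (XiSet Ξ') := (Set.finite_iUnion hΞ'fin).measurableSet
  have hAjmeas : ∀ j, MeasurableSet (uncRegion A' Rj j) := fun j =>
    MeasurableSet.biUnion (Set.to_countable _) fun r _ => hA'meas r
  have hTA : ∀ x ∈ A, T x ∈ A := by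
    intro x hx
    rw [← hA'union] at hx
    obtain ⟨r, hr⟩ := Set.mem_iUnion.1 hx
    exact hΞA (Set.mem_iUnion.2 ⟨r, (hTprop r x hr).1⟩)
  have hTΞ : ∀ x ∈ A, T x ∈ XiSet Ξ' := by
    intro x hx
    rw [← hA'union] at hx
    obtain ⟨r, hr⟩ := Set.mem_iUnion.1 hx
    exact Set.mem_iUnion.2 ⟨r, (hTprop r x hr).1⟩
  have hTf : ∀ x ∈ A, f x ≤ f (T x) + ℓ := by
    intro x hx
    rw [← hA'union] at hx
    obtain ⟨r, hr⟩ := Set.mem_iUnion.1 hx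
    exact (dtd_lip c y hyne x (T x)).trans (by linarith [(hTprop r x hr).2])
  have hmemAj : ∀ (j : J) (z : Plane) (r : R), z ∈ A' r →
      (z ∈ uncRegion A' Rj j ↔ r ∈ Rj j) := by
    intro j z r hz
    constructor
    · intro hzj
      obtain ⟨r', hr', hz'⟩ := Set.mem_iUnion₂.1 hzj
      rwa [← huniq hz' hz]
    · intro hr
      exact Set.mem_iUnion₂.2 ⟨r, hr, hz⟩
  have key : ∀ μ ∈ UC A A' Rj lam, μ.map T ∈ UD A A' Rj lam Ξ' ∧
      cvar β μ f ≤ cvar β (μ.map T) f + ℓ / (1 - β) := by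
    intro μ hμ
    obtain ⟨hμ1, hμA, hμj⟩ := hμ
    haveI : IsFiniteMeasure μ := ⟨by rw [hμ1]; exact ENNReal.one_lt_top⟩
    have hAc : μ Aᶜ = 0 := by
      rw [measure_compl hAmeas (measure_ne_top μ A), hμ1, hμA, tsub_self]
    have hAe : ∀ᵐ x ∂μ, x ∈ A := by
      rw [ae_iff]
      exact hAc
    constructor
    · refine ⟨⟨?_, ?_, ?_⟩, ?_⟩
      · rw [Measure.map_apply hTmeas MeasurableSet.univ, Set.preimage_univ, hμ1]
      · rw [Measure.map_apply hTmeas hAmeas]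
        refine le_antisymm ?_ ?_
        · calc μ (T ⁻¹' A) ≤ μ Set.univ := measure_mono (Set.subset_univ _)
            _ = 1 := hμ1
        · calc (1:ENNReal) = μ A := hμA.symm
            _ ≤ μ (T ⁻¹' A) := measure_mono fun x hx => hTA x hx
      · intro j
        rw [Measure.map_apply hTmeas (hAjmeas j)]
        have hset : T ⁻¹' uncRegion A' Rj j ∩ A = uncRegion A' Rj j ∩ A := by
          ext x
          simp only [Set.mem_inter_iff, Set.mem_preimage]
          constructor <;> rintro ⟨hmem, hxA⟩ <;> refine ⟨?_, hxA⟩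
          · have hxA' := hxA
            rw [← hA'union] at hxA'
            obtain ⟨r, hr⟩ := Set.mem_iUnion.1 hxA'
            have hTx : T x ∈ A' r := hΞ'sub r (hTprop r x hr).1
            exact (hmemAj j x r hr).2 ((hmemAj j (T x) r hTx).1 hmem)
          · have hxA' := hxA
            rw [← hA'union] at hxA'
            obtain ⟨r, hr⟩ := Set.mem_iUnion.1 hxA'
            have hTx : T x ∈ A' r := hΞ'sub r (hTprop r x hr).1
            exact (hmemAj j (T x) r hTx).2 ((hmemAj j x r hr).1 hmem)
        calc μ (T ⁻¹' uncRegion A' Rj j)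
            = μ (T ⁻¹' uncRegion A' Rj j ∩ A) := (measure_inter_conull hAc).symm
          _ = μ (uncRegion A' Rj j ∩ A) := by rw [hset]
          _ = μ (uncRegion A' Rj j) := measure_inter_conull hAc
          _ = ENNReal.ofReal (lam j) := hμj j
      · rw [Measure.map_apply hTmeas hXmeas]
        refine le_antisymm ?_ ?_
        · calc μ (T ⁻¹' XiSet Ξ') ≤ μ Set.univ := measure_mono (Set.subset_univ _)
            _ = 1 := hμ1
        · calc (1:ENNReal) = μ A := hμA.symm
            _ ≤ μ (T ⁻¹' XiSet Ξ') := measure_mono fun x hx => hTΞ x hx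
    · have hSν : {v : ℝ | ∃ α : ℝ, 0 ≤ α ∧
          v = α + (1 / (1 - β)) * ∫ x, max (f x - α) 0 ∂(μ.map T)}.Nonempty :=
        ⟨_, 0, le_rfl, rfl⟩
      have h1 : cvar β μ f - ℓ / (1 - β) ≤ cvar β (μ.map T) f := by
        apply le_csInf hSν
        rintro w ⟨α, hα0, rfl⟩
        set g : Plane → ℝ := fun z => max (f z - α) 0 with hg
        have hg_cont : Continuous g := (hf_cont.sub continuous_const).max continuous_const
        have hmap : ∫ z, g z ∂(μ.map T) = ∫ x, g (T x) ∂μ :=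
          integral_map hTmeas.aemeasurable hg_cont.aestronglyMeasurable
        have hint : Integrable (fun x => g (T x)) μ := by
          refine Integrable.mono' (integrable_const M)
            ((hg_cont.measurable.comp hTmeas).aestronglyMeasurable) ?_
          filter_upwards [hAe] with x hxA
          rw [Real.norm_of_nonneg (le_max_right _ _)]
          have hb1 : f (T x) ≤ M := hfM _ (hTA x hxA)
          have hb2 : g (T x) ≤ max (M - α) 0 := max_le_max (by linarith) le_rfl
          have hb3 : max (M - α) 0 ≤ M := max_le (by linarith) hM0
          linarith
        have hmono : ∫ x, g x ∂μ ≤ ∫ x, g (T x) ∂μ + ℓ := by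
          have hm : ∫ x, g x ∂μ ≤ ∫ x, (g (T x) + ℓ) ∂μ := by
            refine integral_mono_of_nonneg
              (Filter.Eventually.of_forall fun x => le_max_right _ _)
              (hint.add (integrable_const ℓ)) ?_
            filter_upwards [hAe] with x hxA
            have hb1 : f x ≤ f (T x) + ℓ := hTf x hxA
            have hb2 : g x ≤ max (f (T x) + ℓ - α) 0 := max_le_max (by linarith) le_rfl
            have hb3 : max (f (T x) + ℓ - α) 0 ≤ g (T x) + ℓ :=
              max_le (by linarith [le_max_left (f (T x) - α) (0:ℝ)])
                (add_nonneg (le_max_right _ _) hℓ0)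
            linarith
          rwa [integral_add hint (integrable_const ℓ), integral_const, measureReal_def, hμ1,
            ENNReal.toReal_one, one_smul] at hm
        have helem : cvar β μ f ≤ α + (1 / (1 - β)) * ∫ x, g x ∂μ :=
          csInf_le (cvar_bddBelow β hβ1 μ f) ⟨α, hα0, rfl⟩
        have hmul := mul_le_mul_of_nonneg_left hmono hk0
        have hdistrib : (1 / (1 - β)) * (∫ x, g (T x) ∂μ + ℓ) =
            (1 / (1 - β)) * ∫ x, g (T x) ∂μ + ℓ / (1 - β) := by
          ring
        rw [hmap]
        linarith
      linarith
  set SD := {w : ℝ | ∃ ν ∈ UD A A' Rj lam Ξ', w = cvar β ν f} with hSDdef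
  have hSD_bdd : BddAbove SD := by
    refine ⟨M / (1 - β), ?_⟩
    rintro w ⟨ν, hν, rfl⟩
    obtain ⟨⟨hν1, hνA, _⟩, hνΞ⟩ := hν
    haveI : IsFiniteMeasure ν := ⟨by rw [hν1]; exact ENNReal.one_lt_top⟩
    have hAc : ν Aᶜ = 0 := by
      rw [measure_compl hAmeas (measure_ne_top ν A), hν1, hνA, tsub_self]
    have hAe : ∀ᵐ x ∂ν, x ∈ A := by
      rw [ae_iff]
      exact hAc
    have h0 : cvar β ν f ≤ 0 + (1 / (1 - β)) * ∫ x, max (f x - 0) 0 ∂ν :=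
      csInf_le (cvar_bddBelow β hβ1 ν f) ⟨0, le_rfl, rfl⟩
    have hI : ∫ x, max (f x - 0) 0 ∂ν ≤ M := by
      have hm : ∫ x, max (f x - 0) 0 ∂ν ≤ ∫ _x, M ∂ν := by
        refine integral_mono_of_nonneg
          (Filter.Eventually.of_forall fun x => le_max_right _ _)
          (integrable_const M) ?_
        filter_upwards [hAe] with x hxA
        rw [sub_zero]
        exact max_le (hfM x hxA) hM0
      rwa [integral_const, measureReal_def, hν1, ENNReal.toReal_one, one_smul] at hm
    have hmul := mul_le_mul_of_nonneg_left hI hk0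
    have : (1 / (1 - β)) * M = M / (1 - β) := one_div_mul_eq_div _ _
    linarith
  obtain ⟨μ₀, hμ₀⟩ := hUCne
  have hν₀ := key μ₀ hμ₀
  have hmem₀ : cvar β (μ₀.map T) f ∈ SD := ⟨μ₀.map T, hν₀.1, rfl⟩
  have hRHS0 : 0 ≤ sSup SD + ℓ / (1 - β) := by
    have h1 : 0 ≤ cvar β (μ₀.map T) f := cvar_nonneg β hβ1 _ _
    have h2 : cvar β (μ₀.map T) f ≤ sSup SD := le_csSup hSD_bdd hmem₀
    linarith
  show sSup {w : ℝ | ∃ μ ∈ UC A A' Rj lam, w = cvar β μ f} ≤ sSup SD + ℓ / (1 - β)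
  apply Real.sSup_le _ hRHS0
  rintro w ⟨μ, hμ, rfl⟩
  obtain ⟨hUD, hcv⟩ := key μ hμ
  have hle : cvar β (μ.map T) f ≤ sSup SD := le_csSup hSD_bdd ⟨μ.map T, hUD, rfl⟩
  linarith
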